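/- arXiv:1709.09329 — 6 statements merged into one kernel-verified Lean document; each statement's English description precedes it below -/
import Mathlib

section
/- Let J = {j_1 < … < j_p} ⊆ {1, …, m} with p ≥ 1 and r_j ≠ 0 for every j ∈ J. Define the p×p configuration matrix A(J) with entries a_{jj} = 1 and a_{jk} = (r_j^2 + r_k^2 − ρ_{jk}^2)/(2 r_j r_k) for j ≠ k, j, k ∈ J. Then 2^p · (∏_{j∈J} r_j^2) · det A(J) = (−1)^{p−1} B(0⋆J). -/
inductive CMIdx (m : ℕ) : Type
  | zero : CMIdx m
  | star : CMIdx m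
  | pt : Fin m → CMIdx m

/-- Entry of the Cayley–Menger matrix with squared radii `rsq` and squared distances `ρsq`. -/
def cmEnt {m : ℕ} (rsq : Fin m → ℝ) (ρsq : Fin m → Fin m → ℝ) : CMIdx m → CMIdx m → ℝ
  | CMIdx.zero, CMIdx.zero => 0
  | CMIdx.zero, _ => 1
  | _, CMIdx.zero => 1
  | CMIdx.star, CMIdx.star => 0
  | CMIdx.star, CMIdx.pt j => rsq j
  | CMIdx.pt j, CMIdx.star => rsq j
  | CMIdx.pt j, CMIdx.pt k => if j = k then 0 else ρsq j k

/-- Minor `B(rows ; cols)` of the Cayley–Menger matrix. -/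
noncomputable def cmMinor {m : ℕ} (rsq : Fin m → ℝ) (ρsq : Fin m → Fin m → ℝ)
    (rows cols : List (CMIdx m)) : ℝ :=
  if h : rows.length = cols.length then
    Matrix.det (Matrix.of fun i j : Fin rows.length =>
      cmEnt rsq ρsq (rows.get i) (cols.get (Fin.cast h j)))
  else 0

/-! The top-left block `[[0, 1], [1, 0]]` of `B(0⋆J)` is its own inverse, and its Schur complement
is `-M` with `M_{jk} = r_j² + r_k² - b_{jk}`, so `B(0⋆J) = -(-1)^p det M`. Off the diagonal
`b_{jk} = ρ_{jk}²` and on it `b_{jj} = 0`, hence `M = 2 · diag(r) · A(J) · diag(r)`. -/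

open Matrix

section Determinants

variable {R K : Type*} [CommRing R] [Field K] {n : Type*} [Fintype n] [DecidableEq n]

theorem det_fromBlocks_swap_border (s : n → R) (D : Matrix n n R) :
    (fromBlocks !![0, 1; 1, 0] (of ![1, s]) (of ![1, s])ᵀ D).det =
      -(-1) ^ Fintype.card n * (of fun j k => s j + s k - D j k).det := by
  let C : Matrix (Fin 2) (Fin 2) R := !![0, 1; 1, 0]
  have hCC : C * C = 1 := by ext i j; fin_cases i <;> fin_cases j <;> simp [C]
  let : Invertible C := ⟨C, hCC, hCC⟩
  have hschur : D - (of ![1, s])ᵀ * C * of ![1, s] = -of fun j k => s j + s k - D j k := by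
    ext j k
    simp [C, mul_apply, Fin.sum_univ_two]
  rw [det_fromBlocks₁₁, show ⅟C = C from rfl, hschur, det_neg]
  simp [det_fin_two_of]

theorem det_of_mul_mul (u v : n → R) (A : Matrix n n R) :
    (of fun i j => u i * v j * A i j).det = (∏ i, u i) * (∏ i, v i) * A.det := by
  simp_rw [mul_assoc]
  rw [← det_mul_row, ← det_mul_column]
  rfl

def configurationMatrix (r : n → K) (D : n → n → K) : Matrix n n K :=
  of fun j k => if j = k then 1 else (r j ^ 2 + r k ^ 2 - D j k) / (2 * r j * r k)

theorem det_configurationMatrix [NeZero (2 : K)] (r : n → K) (hr : ∀ i, r i ≠ 0) (D : n → n → K) :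
    2 ^ Fintype.card n * (∏ i, r i ^ 2) * (configurationMatrix r D).det =
      (of fun j k => r j ^ 2 + r k ^ 2 - if j = k then 0 else D j k).det := by
  have hprod : 2 ^ Fintype.card n * ∏ i, r i ^ 2 = (∏ i, 2 * r i) * ∏ i, r i := by
    rw [Finset.prod_mul_distrib, Finset.prod_const, Finset.card_univ, Finset.prod_pow]
    ring
  rw [hprod, ← det_of_mul_mul]
  congr 1
  ext j k
  by_cases hjk : j = k
  · subst hjk
    simp [configurationMatrix]
    ring
  · have := hr j
    have := hr k
    simp [configurationMatrix, hjk]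
    field_simp

end Determinants

section CayleyMenger

variable {m : ℕ} (rsq : Fin m → ℝ) (ρsq : Fin m → Fin m → ℝ)

theorem cmMinor_ofFn_self {k : ℕ} (v : Fin k → CMIdx m) :
    cmMinor rsq ρsq (List.ofFn v) (List.ofFn v) =
      (of fun i j => cmEnt rsq ρsq (v i) (v j)).det := by
  rw [cmMinor, dif_pos rfl, ← det_submatrix_equiv_self (finCongr (List.length_ofFn (f := v)).symm)]
  congr 1
  ext i j
  simp

theorem cmEnt_append_submatrix {p : ℕ} (w : Fin p → Fin m) :
    (of fun i j => cmEnt rsq ρsq (Fin.append ![.zero, .star] (CMIdx.pt ∘ w) i)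
        (Fin.append ![.zero, .star] (CMIdx.pt ∘ w) j)).submatrix finSumFinEquiv finSumFinEquiv =
      fromBlocks !![0, 1; 1, 0] (of ![1, rsq ∘ w]) (of ![1, rsq ∘ w])ᵀ
        (of fun j k => cmEnt rsq ρsq (.pt (w j)) (.pt (w k))) := by
  ext (i | j) (k | l)
  all_goals simp only [submatrix_apply, of_apply, finSumFinEquiv_apply_left,
    finSumFinEquiv_apply_right, Fin.append_left, Fin.append_right, fromBlocks_apply₁₁,
    fromBlocks_apply₁₂, fromBlocks_apply₂₁, fromBlocks_apply₂₂, Function.comp_apply]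
  · fin_cases i <;> fin_cases k <;> rfl
  · fin_cases i <;> rfl
  · fin_cases k <;> rfl

theorem cmMinor_zero_star_ofFn {p : ℕ} (w : Fin p → Fin m) :
    cmMinor rsq ρsq (.zero :: .star :: List.ofFn fun i => .pt (w i))
        (.zero :: .star :: List.ofFn fun i => .pt (w i)) =
      -(-1) ^ p *
        (of fun j k => rsq (w j) + rsq (w k) - cmEnt rsq ρsq (.pt (w j)) (.pt (w k))).det := by
  have hlist : (CMIdx.zero :: .star :: List.ofFn fun i => CMIdx.pt (w i)) =
      List.ofFn (Fin.append ![.zero, .star] (CMIdx.pt ∘ w)) := by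
    simp [Function.comp_def]
  rw [hlist, cmMinor_ofFn_self, ← det_submatrix_equiv_self finSumFinEquiv,
    cmEnt_append_submatrix, det_fromBlocks_swap_border, Fintype.card_fin]
  rfl

end CayleyMenger

theorem cm_configuration_det_general (m p : ℕ) (hp : 1 ≤ p)
    (r : Fin m → ℝ) (ρ : Fin m → Fin m → ℝ)
    (J : Fin p → Fin m) (hJ : StrictMono J) (hr : ∀ i, r (J i) ≠ 0) :
    (2 : ℝ) ^ p * (∏ i, r (J i) ^ 2) *
      Matrix.det (Matrix.of fun i j : Fin p =>
        if i = j then (1 : ℝ)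
        else (r (J i) ^ 2 + r (J j) ^ 2 - ρ (J i) (J j) ^ 2) / (2 * r (J i) * r (J j))) =
    (-1 : ℝ) ^ (p - 1) *
      cmMinor (fun i => r i ^ 2) (fun i j => ρ i j ^ 2)
        (CMIdx.zero :: CMIdx.star :: List.ofFn fun i : Fin p => CMIdx.pt (J i))
        (CMIdx.zero :: CMIdx.star :: List.ofFn fun i : Fin p => CMIdx.pt (J i)) := by
  have hpt : ∀ j k, cmEnt (fun i => r i ^ 2) (fun i j => ρ i j ^ 2) (.pt (J j)) (.pt (J k)) =
      if j = k then 0 else ρ (J j) (J k) ^ 2 := by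
    intro j k
    simp [cmEnt, hJ.injective.eq_iff]
  have hsign : (-1 : ℝ) ^ (p - 1) * -(-1) ^ p = 1 := by
    rw [mul_neg, ← pow_add, show p - 1 + p = 2 * (p - 1) + 1 by omega, pow_succ, pow_mul]
    norm_num
  rw [cmMinor_zero_star_ofFn, ← mul_assoc, hsign, one_mul]
  simp only [hpt]
  rw [← det_configurationMatrix (fun i => r (J i)) hr, Fintype.card_fin]
  rfl

/-- For `J = {j_1 < … < j_p}` with all `r_{j} ≠ 0`, the configuration matrix `A(J)` with
`a_{jj} = 1`, `a_{jk} = (r_j² + r_k² − ρ_{jk}²)/(2 r_j r_k)` satisfies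
`2^p ∏_{j∈J} r_j² · det A(J) = (−1)^{p−1} B(0⋆J)`. -/
theorem cm_configuration_det (m p : ℕ) (hp : 1 ≤ p)
    (r : Fin m → ℝ) (ρ : Fin m → Fin m → ℝ) (hsym : ∀ i j, ρ i j = ρ j i)
    (J : Fin p → Fin m) (hJ : StrictMono J) (hr : ∀ i, r (J i) ≠ 0) :
    (2 : ℝ) ^ p * (∏ i, r (J i) ^ 2) *
      Matrix.det (Matrix.of fun i j : Fin p =>
        if i = j then (1 : ℝ)
        else (r (J i) ^ 2 + r (J j) ^ 2 - ρ (J i) (J j) ^ 2) / (2 * r (J i) * r (J j))) =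
    (-1 : ℝ) ^ (p - 1) *
      cmMinor (fun i => r i ^ 2) (fun i j => ρ i j ^ 2)
        (CMIdx.zero :: CMIdx.star :: List.ofFn fun i : Fin p => CMIdx.pt (J i))
        (CMIdx.zero :: CMIdx.star :: List.ofFn fun i : Fin p => CMIdx.pt (J i)) :=
  cm_configuration_det_general m p hp r ρ J hJ hr
end

section
/- Points P_1, …, P_{n+1} ∈ ℝ^n lie in a common affine hyperplane of ℝ^n (equivalently, the family is affinely dependent) if and only if B(0 1 2 … n+1) = 0. -/
/-!
Write `N` for the square matrix with rows `(1, Pᵢ)`; the points are affinely dependent exactly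
when `det N = 0`. Since `‖Pᵢ - Pⱼ‖² = ‖Pᵢ‖² + ‖Pⱼ‖² - 2 ⟪Pᵢ, Pⱼ⟫`, the Cayley–Menger matrix
factors as `L C Lᵀ`, where `L` is block lower triangular with diagonal blocks `1` and `N`, and
`C` is the matrix of the constant form `(a, b, x) · (a', b', x') = a b' + b a' - 2 ⟪x, x'⟫`.
Hence `B = -(-2)ⁿ (det N)²`, which vanishes exactly when `det N` does.
-/

open Matrix

namespace Matrix

variable {α R : Type*} [Fintype α] [DecidableEq α] [CommRing R]

theorem det_option_of_apply_none_some_eq_zero (M : Matrix (Option α) (Option α) R)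
    (hM : ∀ a, M none (some a) = 0) :
    M.det = M none none * (M.submatrix some some).det := by
  set e := Equiv.optionEquivSumPUnit.{0} α
  rw [← det_reindex_self e, ← fromBlocks_toBlocks (reindex e e M)]
  have h₂₁ : (reindex e e M).toBlocks₂₁ = 0 := by
    ext _ a
    exact hM a
  rw [h₂₁, det_fromBlocks_zero₂₁, mul_comm]
  simp only [toBlocks₁₁, toBlocks₂₂, reindex_apply, submatrix_apply, of_apply, det_unique, e,
    Equiv.optionEquivSumPUnit_symm_inl, Equiv.optionEquivSumPUnit_symm_inr]
  rfl

end Matrix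

section CayleyMenger

variable {ι κ : Type*}

/-- The index `none` is the bordering row and column of ones. -/
def cayleyMengerMatrix {X : Type*} [Dist X] (P : ι → X) : Matrix (Option ι) (Option ι) ℝ :=
  of fun
    | none, none => 0
    | none, some _ => 1
    | some _, none => 1
    | some i, some j => dist (P i) (P j) ^ 2

theorem cayleyMengerMatrix_comp {ι' X : Type*} [Dist X] (P : ι → X) (e : ι' → ι) :
    cayleyMengerMatrix (P ∘ e) =
      (cayleyMengerMatrix P).submatrix (Option.map e) (Option.map e) := by
  ext (_ | i) (_ | j) <;> rfl

theorem EuclideanSpace.dist_sq_eq_sum_sq_add_sum_sq_sub_two_mul_sum_mul [Fintype κ]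
    (x y : EuclideanSpace ℝ κ) :
    dist x y ^ 2 = ∑ l, x l ^ 2 + ∑ l, y l ^ 2 - 2 * ∑ l, x l * y l := by
  simp only [EuclideanSpace.dist_sq_eq, Real.dist_eq, sq_abs, Finset.mul_sum,
    ← Finset.sum_add_distrib, ← Finset.sum_sub_distrib]
  exact Finset.sum_congr rfl fun _ _ => by ring

def homogeneousCoords (P : ι → EuclideanSpace ℝ κ) : Matrix ι (Option κ) ℝ :=
  of fun i k => k.elim 1 fun l => P i l

theorem affineIndependent_iff_linearIndependent_homogeneousCoords [Fintype ι] [Fintype κ]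
    (P : ι → EuclideanSpace ℝ κ) :
    AffineIndependent ℝ P ↔ LinearIndependent ℝ (homogeneousCoords P).row := by
  have hcomb : ∀ w : ι → ℝ, ∑ i, w i • (homogeneousCoords P).row i = 0 ↔
      ∑ i, w i = 0 ∧ ∑ i, w i • P i = 0 := by
    intro w
    simp only [funext_iff, Option.forall, WithLp.ext_iff]
    simp [homogeneousCoords, Finset.sum_apply]
  rw [affineIndependent_iff_of_fintype, Fintype.linearIndependent_iff]
  refine forall_congr' fun w => ?_
  rw [hcomb, and_imp]
  exact imp_congr_right fun hw => by rw [Finset.univ.weightedVSub_eq_linear_combination hw]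

theorem affineIndependent_iff_det_homogeneousCoords_ne_zero [Fintype κ] [DecidableEq κ]
    (P : Option κ → EuclideanSpace ℝ κ) :
    AffineIndependent ℝ P ↔ (homogeneousCoords P).det ≠ 0 := by
  rw [affineIndependent_iff_linearIndependent_homogeneousCoords,
    linearIndependent_rows_iff_isUnit, isUnit_iff_isUnit_det, isUnit_iff_ne_zero]

def cayleyMengerFactor [Fintype κ] (P : ι → EuclideanSpace ℝ κ) :
    Matrix (Option ι) (Option (Option κ)) ℝ :=
  of fun
    | none, none => 1
    | none, some _ => 0
    | some i, none => ∑ l, P i l ^ 2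
    | some i, some k => homogeneousCoords P i k

variable (κ) in
def cayleyMengerForm [DecidableEq κ] : Matrix (Option (Option κ)) (Option (Option κ)) ℝ :=
  of fun
    | none, some none => 1
    | some none, none => 1
    | some (some k), some (some l) => if k = l then -2 else 0
    | _, _ => 0

theorem cayleyMengerMatrix_eq_factor_mul_form_mul_transpose [Fintype κ] [DecidableEq κ]
    (P : ι → EuclideanSpace ℝ κ) :
    cayleyMengerMatrix P =
      cayleyMengerFactor P * cayleyMengerForm κ * (cayleyMengerFactor P)ᵀ := by
  ext (_ | i) (_ | j) <;>
    simp [cayleyMengerMatrix, cayleyMengerFactor, cayleyMengerForm, homogeneousCoords,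
      mul_apply, Fintype.sum_option, mul_right_comm _ (2 : ℝ), ← Finset.sum_mul,
      EuclideanSpace.dist_sq_eq_sum_sq_add_sum_sq_sub_two_mul_sum_mul]
  ring

theorem det_cayleyMengerForm [Fintype κ] [DecidableEq κ] :
    (cayleyMengerForm κ).det = -(-2) ^ Fintype.card κ := by
  have hswap : (cayleyMengerForm κ).submatrix (Equiv.swap none (some none)) id =
      diagonal fun | some (some _) => -2 | _ => 1 := by
    ext (_ | _ | k) (_ | _ | l) <;>
      simp [cayleyMengerForm, diagonal, Equiv.swap_apply_of_ne_of_ne]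
  have hperm := det_permute (Equiv.swap none (some none)) (cayleyMengerForm κ)
  rw [hswap, det_diagonal, Equiv.Perm.sign_swap (by simp)] at hperm
  simp only [Fintype.prod_option, Finset.prod_const, Finset.card_univ, one_mul, Units.val_neg,
    Units.val_one, Int.cast_neg, Int.cast_one] at hperm
  linear_combination hperm

theorem det_cayleyMengerFactor [Fintype κ] [DecidableEq κ] (P : Option κ → EuclideanSpace ℝ κ) :
    (cayleyMengerFactor P).det = (homogeneousCoords P).det := by
  rw [det_option_of_apply_none_some_eq_zero _ fun _ => rfl]
  exact one_mul _

theorem det_cayleyMengerMatrix [Fintype κ] [DecidableEq κ] (P : Option κ → EuclideanSpace ℝ κ) :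
    (cayleyMengerMatrix P).det = -(-2) ^ Fintype.card κ * (homogeneousCoords P).det ^ 2 := by
  rw [cayleyMengerMatrix_eq_factor_mul_form_mul_transpose, det_mul, det_mul, det_transpose,
    det_cayleyMengerFactor, det_cayleyMengerForm]
  ring

theorem det_cayleyMengerMatrix_eq_zero_iff [Fintype ι] [DecidableEq ι] [Fintype κ]
    (P : ι → EuclideanSpace ℝ κ) (hcard : Fintype.card ι = Fintype.card κ + 1) :
    (cayleyMengerMatrix P).det = 0 ↔ ¬ AffineIndependent ℝ P := by
  classical
  obtain ⟨e⟩ : Nonempty (Option κ ≃ ι) := Fintype.card_eq.mp (by simp [hcard])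
  have hdet : (cayleyMengerMatrix (P ∘ e)).det = (cayleyMengerMatrix P).det := by
    rw [cayleyMengerMatrix_comp]
    exact det_submatrix_equiv_self e.optionCongr _
  rw [← affineIndependent_equiv e, ← hdet, det_cayleyMengerMatrix,
    affineIndependent_iff_det_homogeneousCoords_ne_zero, not_not]
  simp

end CayleyMenger

/-- `n+1` points of `ℝⁿ` lie in a common affine hyperplane (equivalently, are affinely
dependent) if and only if their Cayley–Menger determinant `B(0 1 2 … n+1)` vanishes. -/
theorem affine_dependent_iff_cayleyMenger_det_eq_zero
    (n : ℕ) (P : Fin (n + 1) → EuclideanSpace ℝ (Fin n)) :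
    (¬ AffineIndependent ℝ P) ↔
      Matrix.det (Matrix.of
        (Matrix.vecCons (Matrix.vecCons (0 : ℝ) fun _ : Fin (n + 1) => (1 : ℝ))
          (fun i => Matrix.vecCons (1 : ℝ)
            (fun j => if i = j then 0 else ‖P i - P j‖ ^ 2)))) = 0 := by
  have hdist : ∀ i j, (if i = j then 0 else ‖P i - P j‖ ^ 2) = dist (P i) (P j) ^ 2 := by
    intro i j
    split_ifs with h <;> simp [h, dist_eq_norm]
  have hmatrix : Matrix.of
        (Matrix.vecCons (Matrix.vecCons (0 : ℝ) fun _ : Fin (n + 1) => (1 : ℝ))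
          (fun i => Matrix.vecCons (1 : ℝ)
            (fun j => if i = j then 0 else ‖P i - P j‖ ^ 2))) =
      (cayleyMengerMatrix P).submatrix (finSuccEquiv (n + 1)) (finSuccEquiv (n + 1)) := by
    ext i j
    cases i using Fin.cases <;> cases j using Fin.cases <;> simp [cayleyMengerMatrix, hdist]
  rw [hmatrix, det_submatrix_equiv_self, det_cayleyMengerMatrix_eq_zero_iff P (by simp)]
end

section
/- Let N = (1, 2, …, n+1) with n ≥ 1, let ∅ ≠ J ⊊ N, and put J^c = N ∖ J (as an increasing sequence). Then for arbitrary real Cayley–Menger data: (i) for every k ∈ J, Σ_{j∈J} B(0 ⋆ ∂_j N ; 0 j ∂_j N) · B(0 k J^c ; 0 j J^c) = B(0 N) · B(0 ⋆ J^c ; 0 k J^c); and (ii) Σ_{j∈J} B(0 ⋆ ∂_j N ; 0 j ∂_j N) · B(0 ⋆ J^c ; 0 j J^c) + B(0 ⋆ N) · B(0 J^c) = B(0 N) · B(0 ⋆ J^c). -/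
/-- The increasing sequence `N = (1, …, n+1)` (as indices of `Fin (n+1)`). -/
def fullList (n : ℕ) : List (CMIdx (n + 1)) :=
  (List.finRange (n + 1)).map CMIdx.pt

/-- `∂_j N` : the increasing sequence `N` with the entry `j` deleted. -/
def delList (n : ℕ) (j : Fin (n + 1)) : List (CMIdx (n + 1)) :=
  ((List.finRange (n + 1)).erase j).map CMIdx.pt

/-- The complement `J^c` of `J` in `N`, as an increasing sequence. -/
def complList (n : ℕ) (J : Finset (Fin (n + 1))) : List (CMIdx (n + 1)) :=
  ((List.finRange (n + 1)).filter fun a => a ∉ J).map CMIdx.pt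

/-!
Let `M` be the full Cayley–Menger matrix, with rows and columns `0, ⋆, 1, …, n+1`. Then
`B(0 ⋆ N) = det M`, `B(0 N) = adj M ⋆ ⋆` and `B(0 ⋆ ∂_j N ; 0 j ∂_j N) = -adj M ⋆ j`.
For any row index `x`, the minor `B(0 x J^c ; 0 c J^c)` is linear in its second column
`(M r c)_r`, so contracting it with the cofactor row `adj M ⋆ c` replaces that column by
`(adj M * M) ⋆ r = det M · δ_{⋆ r}` (`M` is symmetric). In the contracted sum over `c` the
terms with `c = 0` or `c ∈ J^c` vanish (repeated column), leaving `c = ⋆` and `c ∈ J`.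
For `x = k` the rows miss `⋆`, so the new column is zero: this is (i). For `x = ⋆`,
expanding along the new column leaves `det M · B(0 J^c)`: this is (ii).
-/

open scoped Matrix

namespace Matrix

variable {R : Type*} [CommRing R] {ι κ : Type*}

theorem adjugate_apply_equiv [Fintype ι] [DecidableEq ι] {k : ℕ} (A : Matrix ι ι R)
    (e : Fin (k + 1) ≃ ι) (i j : Fin (k + 1)) :
    adjugate A (e i) (e j) =
      (-1) ^ (j + i : ℕ) * (A.submatrix (e ∘ j.succAbove) (e ∘ i.succAbove)).det := by
  rw [← submatrix_apply (adjugate A) e e, ← adjugate_submatrix_equiv_self,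
    adjugate_fin_succ_eq_det_submatrix]
  rfl

theorem det_updateCol_single_self {k : ℕ} (B : Matrix (Fin (k + 1)) (Fin (k + 1)) R)
    (p : Fin (k + 1)) :
    (B.updateCol p (Pi.single p 1)).det = (B.submatrix p.succAbove p.succAbove).det := by
  rw [← det_transpose, ← updateRow_transpose, ← adjugate_apply,
    adjugate_fin_succ_eq_det_submatrix, ← two_mul, pow_mul, neg_one_sq, one_pow, one_mul,
    ← det_transpose]
  rfl

theorem submatrix_update_eq_updateCol [DecidableEq κ] {α : Type*} (A : Matrix ι ι α)
    (r f : κ → ι) (p : κ) (c : ι) :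
    A.submatrix r (Function.update f p c) = (A.submatrix r f).updateCol p fun i => A (r i) c := by
  ext i j
  by_cases h : j = p
  · subst h; simp
  · simp [h]

theorem det_updateCol_zero [Fintype κ] [DecidableEq κ] (A : Matrix κ κ R) (p : κ) :
    (A.updateCol p 0).det = 0 :=
  det_eq_zero_of_column_eq_zero p fun _ => updateCol_self ..

theorem det_submatrix_eq_zero_of_not_injective [Fintype κ] [DecidableEq κ]
    (A : Matrix ι ι R) (r f : κ → ι) (hf : ¬ Function.Injective f) :
    (A.submatrix r f).det = 0 := by
  obtain ⟨i, j, hij, hne⟩ := Function.not_injective_iff.mp hf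
  exact det_zero_of_column_eq hne fun k => by simp [hij]

theorem sum_adjugate_mul_det_submatrix_update [Fintype ι] [DecidableEq ι] [Fintype κ]
    [DecidableEq κ] (M : Matrix ι ι R) (s : ι) (r f : κ → ι) (p : κ) :
    ∑ c, adjugate M s c * (Mᵀ.submatrix r (Function.update f p c)).det =
      M.det * ((Mᵀ.submatrix r f).updateCol p (Pi.single s 1 ∘ r)).det := by
  set B := Mᵀ.submatrix r f
  have hcol :
      ∑ c, adjugate M s c • (fun i => Mᵀ (r i) c) = M.det • (Pi.single s 1 ∘ r) := by
    ext i
    simp [Finset.sum_apply, ← mul_apply, adjugate_mul, one_apply, Pi.single_apply, eq_comm]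
  calc ∑ c, adjugate M s c * (Mᵀ.submatrix r (Function.update f p c)).det
      = ∑ c, adjugate M s c * cramer B (fun i => Mᵀ (r i) c) p := by
        simp only [submatrix_update_eq_updateCol, cramer_apply, B]
    _ = cramer B (∑ c, adjugate M s c • fun i => Mᵀ (r i) c) p := by
        simp [map_sum, Finset.sum_apply]
    _ = M.det * (B.updateCol p (Pi.single s 1 ∘ r)).det := by
        rw [hcol, map_smul, Pi.smul_apply, smul_eq_mul, cramer_apply]

end Matrix

theorem List.get_cons_cons_comp_succAbove_one {α : Type*} (a b : α) (l : List α) :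
    (a :: b :: l).get ∘ Fin.succAbove 1 = (a :: l).get := by
  funext i
  rcases i with ⟨_ | i, hi⟩ <;> rfl

namespace CMIdx

variable {m : ℕ}

def equivSum (m : ℕ) : CMIdx m ≃ Bool ⊕ Fin m where
  toFun
    | zero => .inl false
    | star => .inl true
    | pt j => .inr j
  invFun
    | .inl false => zero
    | .inl true => star
    | .inr j => pt j
  left_inv x := by cases x <;> rfl
  right_inv x := by rcases x with (_ | _) | j <;> rfl

instance : DecidableEq (CMIdx m) := (equivSum m).decidableEq

instance : Fintype (CMIdx m) := Fintype.ofEquiv _ (equivSum m).symm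

theorem pt_injective : Function.Injective (@pt m) := fun _ _ => pt.inj

theorem sum_eq {M : Type*} [AddCommMonoid M] (f : CMIdx m → M) :
    ∑ c, f c = f zero + f star + ∑ j, f (pt j) := by
  rw [← (equivSum m).symm.sum_comp, Fintype.sum_sum_type, Fintype.sum_bool]
  exact congrArg (· + _) (add_comm _ _)

end CMIdx

open CMIdx

section CayleyMenger

variable {m : ℕ} (rsq : Fin m → ℝ) (ρsq : Fin m → Fin m → ℝ)

def cmMat : Matrix (CMIdx m) (CMIdx m) ℝ := Matrix.of (cmEnt rsq ρsq)

theorem cmMat_isSymm (hsym : ∀ i j, ρsq i j = ρsq j i) : (cmMat rsq ρsq).IsSymm := by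
  ext a b
  cases a <;> cases b <;> simp only [cmMat, Matrix.transpose_apply, Matrix.of_apply, cmEnt]
  rename_i j k
  by_cases h : j = k
  · simp [h]
  · rw [if_neg h, if_neg (Ne.symm h), hsym]

theorem cmMinor_eq_det {rows cols : List (CMIdx m)} (h : rows.length = cols.length) :
    cmMinor rsq ρsq rows cols =
      ((cmMat rsq ρsq).submatrix rows.get (cols.get ∘ Fin.cast h)).det :=
  dif_pos h

theorem cmMinor_self_eq_det (l : List (CMIdx m)) :
    cmMinor rsq ρsq l l = ((cmMat rsq ρsq).submatrix l.get l.get).det :=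
  dif_pos rfl

theorem cmMinor_cons_cons_eq_det (a b c : CMIdx m) (l : List (CMIdx m)) :
    cmMinor rsq ρsq (a :: b :: l) (a :: c :: l) =
      ((cmMat rsq ρsq).submatrix (a :: b :: l).get (a :: c :: l).get).det :=
  dif_pos rfl

theorem cmMinor_eq_zero_of_not_nodup {rows cols : List (CMIdx m)} (hcols : ¬ cols.Nodup) :
    cmMinor rsq ρsq rows cols = 0 := by
  by_cases h : rows.length = cols.length
  · rw [cmMinor_eq_det rsq ρsq h]
    refine Matrix.det_submatrix_eq_zero_of_not_injective _ _ _ fun hinj => hcols ?_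
    exact List.nodup_iff_injective_get.mpr (hinj.comp (Fin.cast_injective h.symm))
  · exact dif_neg h

theorem cmMinor_comm (hsym : ∀ i j, ρsq i j = ρsq j i) (rows cols : List (CMIdx m)) :
    cmMinor rsq ρsq rows cols = cmMinor rsq ρsq cols rows := by
  by_cases h : rows.length = cols.length
  · rw [cmMinor_eq_det rsq ρsq h, cmMinor_eq_det rsq ρsq h.symm]
    calc _ = (((cmMat rsq ρsq).submatrix cols.get (rows.get ∘ Fin.cast h.symm)).submatrix
          (finCongr h) (finCongr h))ᵀ.det := by
          congr 1
          ext i j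
          exact (cmMat_isSymm rsq ρsq hsym).apply _ _
      _ = _ := by rw [Matrix.det_transpose, Matrix.det_submatrix_equiv_self]
  · rw [cmMinor, cmMinor, dif_neg h, dif_neg (Ne.symm h)]

end CayleyMenger

section FullMatrix

variable {n : ℕ} (rsq : Fin (n + 1) → ℝ) (ρsq : Fin (n + 1) → Fin (n + 1) → ℝ)
  (J : Finset (Fin (n + 1)))

theorem nodup_fullList : (fullList n).Nodup := (List.nodup_finRange _).map pt_injective

theorem nodup_delList (j : Fin (n + 1)) : (delList n j).Nodup :=
  ((List.nodup_finRange _).erase _).map pt_injective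

theorem mem_delList {i j : Fin (n + 1)} : pt i ∈ delList n j ↔ i ≠ j := by
  simp [delList, (List.nodup_finRange _).mem_erase_iff]

theorem mem_complList {i : Fin (n + 1)} : pt i ∈ complList n J ↔ i ∉ J := by
  simp [complList]

theorem star_notMem_complList : star ∉ complList n J := by simp [complList]

theorem det_cmMat :
    (cmMat rsq ρsq).det =
      cmMinor rsq ρsq (zero :: star :: fullList n) (zero :: star :: fullList n) := by
  have hl : (zero :: star :: fullList n).Nodup :=
    List.nodup_cons.2
      ⟨by simp [fullList], List.nodup_cons.2 ⟨by simp [fullList], nodup_fullList⟩⟩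
  have hmem : ∀ c, c ∈ zero :: star :: fullList n := by rintro (_ | _ | i) <;> simp [fullList]
  rw [cmMinor_self_eq_det]
  exact (Matrix.det_submatrix_equiv_self (List.Nodup.getEquivOfForallMemList _ hl hmem) _).symm

theorem adjugate_cmMat_star_star :
    (cmMat rsq ρsq).adjugate star star =
      cmMinor rsq ρsq (zero :: fullList n) (zero :: fullList n) := by
  have hl : (star :: zero :: fullList n).Nodup :=
    List.nodup_cons.2
      ⟨by simp [fullList], List.nodup_cons.2 ⟨by simp [fullList], nodup_fullList⟩⟩
  have hmem : ∀ c, c ∈ star :: zero :: fullList n := by rintro (_ | _ | i) <;> simp [fullList]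
  rw [cmMinor_self_eq_det]
  refine ((cmMat rsq ρsq).adjugate_apply_equiv
    (List.Nodup.getEquivOfForallMemList _ hl hmem) 0 0).trans ?_
  simp only [Fin.val_zero, add_zero, pow_zero, one_mul]
  rfl

theorem adjugate_cmMat_star_pt (j : Fin (n + 1)) :
    (cmMat rsq ρsq).adjugate star (pt j) =
      -cmMinor rsq ρsq (zero :: star :: delList n j) (zero :: pt j :: delList n j) := by
  have hl : (zero :: pt j :: star :: delList n j).Nodup := by
    simp only [List.nodup_cons, List.mem_cons, mem_delList, nodup_delList]
    simp [delList]
  have hmem : ∀ c, c ∈ zero :: pt j :: star :: delList n j := by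
    rintro (_ | _ | i) <;> simp [mem_delList, em]
  let e := List.Nodup.getEquivOfForallMemList _ hl hmem
  have hcols : e ∘ Fin.succAbove 2 = (zero :: pt j :: delList n j).get := by
    funext i; rcases i with ⟨_ | _ | i, hi⟩ <;> rfl
  have hrows : e ∘ Fin.succAbove 1 = (zero :: star :: delList n j).get :=
    List.get_cons_cons_comp_succAbove_one _ _ _
  rw [cmMinor_cons_cons_eq_det]
  refine ((cmMat rsq ρsq).adjugate_apply_equiv e 2 1).trans ?_
  rw [hrows, hcols, Fin.val_one, Fin.val_two]
  norm_num


theorem get_cons_cons_complList_eq_update (c : CMIdx (n + 1)) :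
    (zero :: c :: complList n J).get = Function.update (zero :: star :: complList n J).get 1 c := by
  funext i
  rcases i with ⟨_ | _ | i, hi⟩
  · rfl
  · rfl
  · exact (Function.update_of_ne (by simp only [Ne, Fin.ext_iff, Fin.val_one]; omega) _ _).symm

theorem sum_adjugate_mul_cmMinor_eq_det_mul (hsym : ∀ i j, ρsq i j = ρsq j i)
    (x : CMIdx (n + 1)) :
    ∑ c, (cmMat rsq ρsq).adjugate star c *
        cmMinor rsq ρsq (zero :: x :: complList n J) (zero :: c :: complList n J) =
      (cmMat rsq ρsq).det *
        (((cmMat rsq ρsq).submatrix (zero :: x :: complList n J).get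
          (zero :: star :: complList n J).get).updateCol 1
            (Pi.single star 1 ∘ (zero :: x :: complList n J).get)).det := by
  have hM := (cmMat_isSymm rsq ρsq hsym).eq
  calc _ = ∑ c, (cmMat rsq ρsq).adjugate star c * ((cmMat rsq ρsq)ᵀ.submatrix
          (zero :: x :: complList n J).get
          (Function.update (zero :: star :: complList n J).get 1 c)).det := by
        refine Finset.sum_congr rfl fun c _ => ?_
        rw [cmMinor_cons_cons_eq_det, get_cons_cons_complList_eq_update J c, hM]
    _ = _ := by rw [Matrix.sum_adjugate_mul_det_submatrix_update, hM]

theorem sum_adjugate_mul_cmMinor_eq_cmMinor_sub_sum (x : CMIdx (n + 1)) :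
    ∑ c, (cmMat rsq ρsq).adjugate star c *
        cmMinor rsq ρsq (zero :: x :: complList n J) (zero :: c :: complList n J) =
      cmMinor rsq ρsq (zero :: fullList n) (zero :: fullList n) *
          cmMinor rsq ρsq (zero :: x :: complList n J) (zero :: star :: complList n J) -
        ∑ j ∈ J, cmMinor rsq ρsq (zero :: star :: delList n j) (zero :: pt j :: delList n j) *
          cmMinor rsq ρsq (zero :: x :: complList n J) (zero :: pt j :: complList n J) := by
  have hzero : cmMinor rsq ρsq (zero :: x :: complList n J) (zero :: zero :: complList n J) = 0 :=
    cmMinor_eq_zero_of_not_nodup rsq ρsq (by simp)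
  have hcompl : ∀ j ∉ J,
      cmMinor rsq ρsq (zero :: x :: complList n J) (zero :: pt j :: complList n J) = 0 :=
    fun j hj => cmMinor_eq_zero_of_not_nodup rsq ρsq (by simp [mem_complList, hj])
  rw [CMIdx.sum_eq, hzero, mul_zero, zero_add, adjugate_cmMat_star_star,
    ← Finset.sum_subset (Finset.subset_univ J) fun j _ hj => by rw [hcompl j hj, mul_zero]]
  simp only [adjugate_cmMat_star_pt, neg_mul, Finset.sum_neg_distrib, sub_eq_add_neg]

theorem single_star_comp_get_pt (k : Fin (n + 1)) :
    Pi.single star (1 : ℝ) ∘ (zero :: pt k :: complList n J).get = 0 := by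
  funext i
  rcases i with ⟨_ | _ | i, hi⟩
  · rfl
  · rfl
  · exact Pi.single_eq_of_ne (ne_of_mem_of_not_mem (List.get_mem _ _) (star_notMem_complList J)) _

theorem single_star_comp_get_star :
    Pi.single star (1 : ℝ) ∘ (zero :: star :: complList n J).get = Pi.single 1 1 := by
  funext i
  rcases i with ⟨_ | _ | i, hi⟩
  · rfl
  · rfl
  · have hne : (zero :: star :: complList n J).get ⟨i + 2, hi⟩ ≠ star :=
      ne_of_mem_of_not_mem (List.get_mem (complList n J) ⟨i, by simpa using hi⟩)
        (star_notMem_complList J)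
    rw [Function.comp_apply, Pi.single_eq_of_ne hne, Pi.single_eq_of_ne]
    simp only [Ne, Fin.ext_iff, Fin.val_one]
    omega

theorem sum_cmMinor_mul_cmMinor_pt (hsym : ∀ i j, ρsq i j = ρsq j i) (k : Fin (n + 1)) :
    ∑ j ∈ J, cmMinor rsq ρsq (zero :: star :: delList n j) (zero :: pt j :: delList n j) *
        cmMinor rsq ρsq (zero :: pt k :: complList n J) (zero :: pt j :: complList n J) =
      cmMinor rsq ρsq (zero :: fullList n) (zero :: fullList n) *
        cmMinor rsq ρsq (zero :: pt k :: complList n J) (zero :: star :: complList n J) := by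
  have h := (sum_adjugate_mul_cmMinor_eq_det_mul rsq ρsq J hsym (pt k)).symm.trans
    (sum_adjugate_mul_cmMinor_eq_cmMinor_sub_sum rsq ρsq J (pt k))
  rw [single_star_comp_get_pt, Matrix.det_updateCol_zero, mul_zero] at h
  linarith

theorem sum_cmMinor_mul_cmMinor_star (hsym : ∀ i j, ρsq i j = ρsq j i) :
    ∑ j ∈ J, cmMinor rsq ρsq (zero :: star :: delList n j) (zero :: pt j :: delList n j) *
        cmMinor rsq ρsq (zero :: star :: complList n J) (zero :: pt j :: complList n J) +
      cmMinor rsq ρsq (zero :: star :: fullList n) (zero :: star :: fullList n) *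
        cmMinor rsq ρsq (zero :: complList n J) (zero :: complList n J) =
      cmMinor rsq ρsq (zero :: fullList n) (zero :: fullList n) *
        cmMinor rsq ρsq (zero :: star :: complList n J) (zero :: star :: complList n J) := by
  have h := (sum_adjugate_mul_cmMinor_eq_det_mul rsq ρsq J hsym star).symm.trans
    (sum_adjugate_mul_cmMinor_eq_cmMinor_sub_sum rsq ρsq J star)
  rw [single_star_comp_get_star, Matrix.det_updateCol_single_self, Matrix.submatrix_submatrix,
    List.get_cons_cons_comp_succAbove_one, ← cmMinor_self_eq_det, det_cmMat] at h
  linarith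

end FullMatrix

theorem cm_sylvester_identities_general (n : ℕ)
    (rsq : Fin (n + 1) → ℝ) (ρsq : Fin (n + 1) → Fin (n + 1) → ℝ)
    (hsym : ∀ i j, ρsq i j = ρsq j i)
    (J : Finset (Fin (n + 1))) :
    (∀ k ∈ J,
      (∑ j ∈ J,
        cmMinor rsq ρsq ([CMIdx.zero, CMIdx.star] ++ delList n j)
            ([CMIdx.zero, CMIdx.pt j] ++ delList n j) *
          cmMinor rsq ρsq ([CMIdx.zero, CMIdx.pt k] ++ complList n J)
            ([CMIdx.zero, CMIdx.pt j] ++ complList n J)) =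
      cmMinor rsq ρsq (CMIdx.zero :: fullList n) (CMIdx.zero :: fullList n) *
        cmMinor rsq ρsq ([CMIdx.zero, CMIdx.star] ++ complList n J)
          ([CMIdx.zero, CMIdx.pt k] ++ complList n J)) ∧
    ((∑ j ∈ J,
        cmMinor rsq ρsq ([CMIdx.zero, CMIdx.star] ++ delList n j)
            ([CMIdx.zero, CMIdx.pt j] ++ delList n j) *
          cmMinor rsq ρsq ([CMIdx.zero, CMIdx.star] ++ complList n J)
            ([CMIdx.zero, CMIdx.pt j] ++ complList n J)) +
        cmMinor rsq ρsq (CMIdx.zero :: CMIdx.star :: fullList n)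
            (CMIdx.zero :: CMIdx.star :: fullList n) *
          cmMinor rsq ρsq (CMIdx.zero :: complList n J) (CMIdx.zero :: complList n J) =
      cmMinor rsq ρsq (CMIdx.zero :: fullList n) (CMIdx.zero :: fullList n) *
        cmMinor rsq ρsq ([CMIdx.zero, CMIdx.star] ++ complList n J)
          ([CMIdx.zero, CMIdx.star] ++ complList n J)) := by
  simp only [List.cons_append, List.nil_append]
  refine ⟨fun k _ => ?_, sum_cmMinor_mul_cmMinor_star rsq ρsq J hsym⟩
  rw [sum_cmMinor_mul_cmMinor_pt rsq ρsq J hsym k, cmMinor_comm rsq ρsq hsym (zero :: pt k :: _)]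

/-- Sylvester-type identities for Cayley–Menger minors (Lemma 22 of Aomoto–Machida):
for `N = (1,…,n+1)`, `∅ ≠ J ⊊ N`, `J^c = N ∖ J`, and arbitrary real data:
(i) for every `k ∈ J`,
`Σ_{j∈J} B(0⋆∂_jN ; 0j∂_jN) · B(0kJ^c ; 0jJ^c) = B(0N) · B(0⋆J^c ; 0kJ^c)`; and
(ii) `Σ_{j∈J} B(0⋆∂_jN ; 0j∂_jN) · B(0⋆J^c ; 0jJ^c) + B(0⋆N) · B(0J^c)
  = B(0N) · B(0⋆J^c)`. -/
theorem cm_sylvester_identities (n : ℕ) (hn : 1 ≤ n)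
    (rsq : Fin (n + 1) → ℝ) (ρsq : Fin (n + 1) → Fin (n + 1) → ℝ)
    (hsym : ∀ i j, ρsq i j = ρsq j i)
    (J : Finset (Fin (n + 1))) (hne : J.Nonempty) (hproper : J ≠ Finset.univ) :
    (∀ k ∈ J,
      (∑ j ∈ J,
        cmMinor rsq ρsq ([CMIdx.zero, CMIdx.star] ++ delList n j)
            ([CMIdx.zero, CMIdx.pt j] ++ delList n j) *
          cmMinor rsq ρsq ([CMIdx.zero, CMIdx.pt k] ++ complList n J)
            ([CMIdx.zero, CMIdx.pt j] ++ complList n J)) =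
      cmMinor rsq ρsq (CMIdx.zero :: fullList n) (CMIdx.zero :: fullList n) *
        cmMinor rsq ρsq ([CMIdx.zero, CMIdx.star] ++ complList n J)
          ([CMIdx.zero, CMIdx.pt k] ++ complList n J)) ∧
    ((∑ j ∈ J,
        cmMinor rsq ρsq ([CMIdx.zero, CMIdx.star] ++ delList n j)
            ([CMIdx.zero, CMIdx.pt j] ++ delList n j) *
          cmMinor rsq ρsq ([CMIdx.zero, CMIdx.star] ++ complList n J)
            ([CMIdx.zero, CMIdx.pt j] ++ complList n J)) +
        cmMinor rsq ρsq (CMIdx.zero :: CMIdx.star :: fullList n)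
            (CMIdx.zero :: CMIdx.star :: fullList n) *
          cmMinor rsq ρsq (CMIdx.zero :: complList n J) (CMIdx.zero :: complList n J) =
      cmMinor rsq ρsq (CMIdx.zero :: fullList n) (CMIdx.zero :: fullList n) *
        cmMinor rsq ρsq ([CMIdx.zero, CMIdx.star] ++ complList n J)
          ([CMIdx.zero, CMIdx.star] ++ complList n J)) :=
  cm_sylvester_identities_general n rsq ρsq hsym J
end

section
/- Let P_1, …, P_m ∈ ℝ^n with m ≥ n+1 and ρ_{jk}^2 = ‖P_j − P_k‖^2. Let (μ_1, …, μ_n) be any permutation of (1, …, n) and let k_1, …, k_n ∈ {1, …, m} be distinct with k_i ∉ {n, n+1} for 1 ≤ i ≤ n−1 and k_n ≠ n+1. Then B(0 μ_1 … μ_n n+1 ; 0 k_1 … k_n n+1) · B(0 μ_1 … μ_n n+1 ; 0 k_1 … k_{n−1} n n+1) = B(0 1 2 … n+1) · B(0 k_1 … k_{n−1} n n+1 ; 0 k_1 … k_n n+1). -/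
/-! Via `‖P - Q‖² = ‖P‖² - 2⟪P, Q⟫ + ‖Q‖²`, the Cayley–Menger entry `b_{xy}` is the dot product in
`ℝⁿ⁺²` of the lift `P ↦ (P, ‖P‖², 1)`, `0 ↦ (0, 1, 0)` of `x` with the dual lift
`P ↦ (-2P, 1, ‖P‖²)`, `0 ↦ (0, 0, 1)` of `y`. Hence every minor of size `n + 2` factors as
`B(I ; I') = u(I) w(I')`. Writing `R = (0 μ₁ … μₙ n+1)`, `C₁ = (0 k₁ … kₙ n+1)`,
`C₂ = (0 k₁ … k_{n-1} n n+1)`, both sides of the identity equal `u(R) w(R) u(C₂) w(C₁)`, using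
the symmetry `B(R ; C₂) = B(C₂ ; R)` and `B(R ; R) = B(0 1 … n+1)`, as `R` is a reordering of
`0 1 … n+1`. -/

/-- Minor of the Cayley–Menger matrix of points `P` (index `none` is the extra `0`-row of
ones, `some j` is the point `P j`), with given row and column index sequences. -/
noncomputable def pMinor {n m : ℕ} (P : Fin m → EuclideanSpace ℝ (Fin n))
    (rows cols : List (Option (Fin m))) : ℝ :=
  if h : rows.length = cols.length then
    Matrix.det (Matrix.of fun a b : Fin rows.length =>
      match rows.get a, cols.get (Fin.cast h b) with
      | none, none => 0
      | none, some _ => 1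
      | some _, none => 1
      | some i, some j => ‖P i - P j‖ ^ 2)
  else 0

variable {n m : ℕ} (P : Fin m → EuclideanSpace ℝ (Fin n))

noncomputable def cmEntry : Option (Fin m) → Option (Fin m) → ℝ
  | none, none => 0
  | none, some _ => 1
  | some _, none => 1
  | some i, some j => ‖P i - P j‖ ^ 2

noncomputable def cmMatrix {ι κ : Type*} (r : ι → Option (Fin m)) (c : κ → Option (Fin m)) :
    Matrix ι κ ℝ :=
  Matrix.of fun a b => cmEntry P (r a) (c b)

noncomputable def cmLift : Option (Fin m) → Fin n ⊕ Fin 2 → ℝ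
  | none => Sum.elim 0 ![1, 0]
  | some i => Sum.elim (P i) ![‖P i‖ ^ 2, 1]

noncomputable def cmDualLift : Option (Fin m) → Fin n ⊕ Fin 2 → ℝ
  | none => Sum.elim 0 ![0, 1]
  | some i => Sum.elim (fun c => -2 * P i c) ![1, ‖P i‖ ^ 2]

lemma cmEntry_comm (x y : Option (Fin m)) : cmEntry P x y = cmEntry P y x := by
  cases x <;> cases y <;> simp [cmEntry, norm_sub_rev]

lemma cmEntry_eq_dotProduct (x y : Option (Fin m)) :
    cmEntry P x y = cmLift P x ⬝ᵥ cmDualLift P y := by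
  rcases x with _ | i <;> rcases y with _ | j <;>
    simp only [cmEntry, cmLift, cmDualLift, dotProduct, Fintype.sum_sum_type, Sum.elim_inl,
      Sum.elim_inr, Fin.sum_univ_two, Matrix.cons_val_zero, Matrix.cons_val_one,
      Matrix.cons_val_fin_one, Pi.zero_apply, zero_mul, mul_zero, Finset.sum_const_zero]
  · norm_num
  · norm_num
  · norm_num
  · have hinner : ∑ c, P i c * (-2 * P j c) = -(2 * inner ℝ (P i) (P j)) := by
      rw [EuclideanSpace.inner_eq_star_dotProduct, dotProduct, Finset.mul_sum,
        ← Finset.sum_neg_distrib]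
      exact Finset.sum_congr rfl fun c _ => by rw [star_trivial]; ring
    rw [hinner, norm_sub_sq_real]
    ring

lemma cmMatrix_transpose {ι κ : Type*} (r : ι → Option (Fin m)) (c : κ → Option (Fin m)) :
    (cmMatrix P r c).transpose = cmMatrix P c r := by
  ext a b
  exact cmEntry_comm P _ _

lemma cmMatrix_eq_mul {ι κ : Type*} (r : ι → Option (Fin m)) (c : κ → Option (Fin m)) :
    cmMatrix P r c =
      Matrix.of (fun a => cmLift P (r a)) * Matrix.of fun j b => cmDualLift P (c b) j := by
  ext a b
  exact cmEntry_eq_dotProduct P _ _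

lemma det_cmMatrix (r c : Fin (n + 2) → Option (Fin m)) :
    (cmMatrix P r c).det =
      ((Matrix.of fun a => cmLift P (r a)).submatrix id finSumFinEquiv.symm).det *
        ((Matrix.of fun j b => cmDualLift P (c b) j).submatrix finSumFinEquiv.symm id).det := by
  rw [← Matrix.det_mul, Matrix.submatrix_mul_equiv, ← cmMatrix_eq_mul]
  rfl

lemma pMinor_eq_det_cmMatrix {l₁ l₂ : List (Option (Fin m))} {k : ℕ} (h₁ : l₁.length = k)
    (h₂ : l₂.length = k) :
    pMinor P l₁ l₂ = (cmMatrix P (l₁.get ∘ Fin.cast h₁.symm) (l₂.get ∘ Fin.cast h₂.symm)).det := by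
  subst h₁
  rw [pMinor, dif_pos h₂.symm]
  rfl

lemma pMinor_comm (l₁ l₂ : List (Option (Fin m))) : pMinor P l₁ l₂ = pMinor P l₂ l₁ := by
  by_cases h : l₁.length = l₂.length
  · rw [pMinor_eq_det_cmMatrix P h rfl, pMinor_eq_det_cmMatrix P rfl h, ← Matrix.det_transpose,
      cmMatrix_transpose]
  · rw [pMinor, pMinor, dif_neg h, dif_neg (Ne.symm h)]

lemma pMinor_self_eq_of_perm {l₁ l₂ : List (Option (Fin m))} (h : l₁.Perm l₂) :
    pMinor P l₁ l₁ = pMinor P l₂ l₂ := by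
  let e : Fin l₁.length ≃ Fin l₂.length :=
    Equiv.ofBijective h.idxBij ⟨h.idxBij_injective, h.idxBij_surjective⟩
  have he : l₂.get ∘ e = l₁.get := funext h.getElem_idxBij_eq_getElem
  rw [pMinor_eq_det_cmMatrix P rfl rfl, pMinor_eq_det_cmMatrix P rfl rfl,
    ← Matrix.det_submatrix_equiv_self e, ← he]
  rfl

lemma exists_pMinor_eq_mul :
    ∃ u w : List (Option (Fin m)) → ℝ, ∀ l₁ l₂, l₁.length = n + 2 → l₂.length = n + 2 →
      pMinor P l₁ l₂ = u l₁ * w l₂ := by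
  refine ⟨fun l => if h : l.length = n + 2 then
      ((Matrix.of fun a => cmLift P (l.get (Fin.cast h.symm a))).submatrix id
        finSumFinEquiv.symm).det else 0,
    fun l => if h : l.length = n + 2 then
      ((Matrix.of fun j b => cmDualLift P (l.get (Fin.cast h.symm b)) j).submatrix
        finSumFinEquiv.symm id).det else 0,
    fun l₁ l₂ h₁ h₂ => ?_⟩
  simp only [dif_pos h₁, dif_pos h₂]
  rw [pMinor_eq_det_cmMatrix P h₁ h₂, det_cmMatrix]
  rfl

theorem pMinor_mul_pMinor_of_perm {R S C₁ C₂ : List (Option (Fin m))} (hR : R.length = n + 2)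
    (hC₁ : C₁.length = n + 2) (hC₂ : C₂.length = n + 2) (hRS : R.Perm S) :
    pMinor P R C₁ * pMinor P R C₂ = pMinor P S S * pMinor P C₂ C₁ := by
  obtain ⟨u, w, huw⟩ := exists_pMinor_eq_mul P
  rw [pMinor_comm P R C₂, ← pMinor_self_eq_of_perm P hRS, huw _ _ hR hC₁, huw _ _ hC₂ hR,
    huw _ _ hR hR, huw _ _ hC₂ hC₁]
  ring

-- 1-based labels of the paper are represented by `Fin`-values one less.
/-- Identity (62) of Aomoto–Machida: for points `P_1,…,P_m ∈ ℝⁿ` (`m ≥ n+1`), a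
permutation `(μ_1,…,μ_n)` of `(1,…,n)` and distinct `k_1,…,k_n` with `k_i ∉ {n, n+1}`
for `i ≤ n−1` and `k_n ≠ n+1`:
`B(0 μ₁…μₙ n+1 ; 0 k₁…kₙ n+1) · B(0 μ₁…μₙ n+1 ; 0 k₁…k_{n−1} n n+1)
  = B(0 1 2 … n+1) · B(0 k₁…k_{n−1} n n+1 ; 0 k₁…kₙ n+1)`.
(1-based labels are represented by `Fin`-values one less.) -/
theorem cm_points_jacobi_identity (n m : ℕ) (hn : 1 ≤ n) (hm : n + 1 ≤ m)
    (P : Fin m → EuclideanSpace ℝ (Fin n))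
    (σ : Equiv.Perm (Fin n)) (kf : Fin n → Fin m) :
    pMinor P
        ((none : Option (Fin m)) ::
          (List.ofFn fun i : Fin n => some (⟨((σ i : Fin n) : ℕ), by omega⟩ : Fin m)) ++
          [some (⟨n, by omega⟩ : Fin m)])
        ((none : Option (Fin m)) :: (List.ofFn fun i : Fin n => some (kf i)) ++
          [some (⟨n, by omega⟩ : Fin m)]) *
      pMinor P
        ((none : Option (Fin m)) ::
          (List.ofFn fun i : Fin n => some (⟨((σ i : Fin n) : ℕ), by omega⟩ : Fin m)) ++
          [some (⟨n, by omega⟩ : Fin m)])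
        ((none : Option (Fin m)) ::
          (List.ofFn fun i : Fin (n - 1) => some (kf ⟨(i : ℕ), by omega⟩)) ++
          [some (⟨n - 1, by omega⟩ : Fin m), some (⟨n, by omega⟩ : Fin m)]) =
    pMinor P
        ((none : Option (Fin m)) ::
          List.ofFn fun i : Fin (n + 1) => some (⟨(i : ℕ), by omega⟩ : Fin m))
        ((none : Option (Fin m)) ::
          List.ofFn fun i : Fin (n + 1) => some (⟨(i : ℕ), by omega⟩ : Fin m)) *
      pMinor P
        ((none : Option (Fin m)) ::
          (List.ofFn fun i : Fin (n - 1) => some (kf ⟨(i : ℕ), by omega⟩)) ++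
          [some (⟨n - 1, by omega⟩ : Fin m), some (⟨n, by omega⟩ : Fin m)])
        ((none : Option (Fin m)) :: (List.ofFn fun i : Fin n => some (kf i)) ++
          [some (⟨n, by omega⟩ : Fin m)]) := by
  refine pMinor_mul_pMinor_of_perm P (by simp) (by simp) (by simp; omega) ?_
  rw [List.cons_append, List.ofFn_succ_last]
  exact .cons _ (.append_right _ (σ.ofFn_comp_perm fun i => some (⟨i, by omega⟩ : Fin m)))
end

section
/- Let p ≥ 1 and let μ_1, …, μ_{p+1}, k_1, …, k_p, a, b ∈ {1, …, m} be pairwise distinct indices, with all r_j^2, ρ_{jk}^2 arbitrary reals. Write K_{p−1} = (k_1, …, k_{p−1}) and K_p = (k_1, …, k_p). Then Σ_{ν=1}^{p+1} (−1)^{p+1−ν} B(0 μ_1 … μ̂_ν … μ_{p+1} b ; 0 K_{p−1} a b) · B(0 ⋆ K_p b ; 0 μ_ν K_p b) = B(0 μ_1 … μ_{p+1} b ; 0 K_p a b) · B(0 K_{p−1} ⋆ b ; 0 K_p b) + B(0 μ_1 … μ_{p+1} b ; 0 K_{p−1} a ⋆ b) · B(0 K_p b), where μ̂_ν means that μ_ν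 is omitted. -/
/-!
Put `D(s) = B(0 μ₁…μ_{p+1} b ; 0 K_{p−1} a s b)` and `F(s) = B(0 ⋆ K_p b ; 0 s K_p b)`.
Expanding along the column of `s`, `D(s) = Σᵢ αᵢ b_{xᵢ s}` over the rows `xᵢ` of `D` and
`F(s) = Σₗ βₗ b_{yₗ s}` over the rows `yₗ` of `F`, so symmetry of `B` gives
`Σᵢ αᵢ F(xᵢ) = Σₗ βₗ D(yₗ)`. On the left `F(0) = F(b) = 0` (repeated column), leaving the sum
over `ν`. On the right `D(y) = 0` whenever `y` is already a column of `D`, which leaves the rows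
`⋆` and `k_p`; moving `⋆` and `k_p` into place in their minors gives the two products.
-/

namespace Fin

variable {α : Type*} {n : ℕ}

theorem removeNth_succ_cons (i : Fin (n + 1)) (x : α) (p : Fin (n + 1) → α) :
    removeNth i.succ (cons x p : Fin (n + 2) → α) = cons x (removeNth i p) := by
  ext j
  cases j using Fin.cases <;> simp [removeNth_apply, succ_succAbove_succ]

theorem removeNth_castSucc_snoc (i : Fin (n + 1)) (x : α) (p : Fin (n + 1) → α) :
    removeNth i.castSucc (snoc p x : Fin (n + 2) → α) = snoc (removeNth i p) x := by
  ext j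
  cases j using Fin.lastCases <;> simp [removeNth_apply, castSucc_succAbove_castSucc]

theorem insertNth_castSucc_snoc (i : Fin (n + 1)) (x a : α) (p : Fin n → α) :
    (insertNth i.castSucc x (snoc p a) : Fin (n + 2) → α) = snoc (insertNth i x p) a := by
  ext j
  cases j using Fin.succAboveCases i.castSucc with
  | x => simp
  | p j =>
    simp only [insertNth_apply_succAbove]
    cases j using Fin.lastCases <;> simp [castSucc_succAbove_castSucc]

end Fin

theorem List.ofFn_snoc {α : Type*} {n : ℕ} (f : Fin n → α) (y : α) :
    List.ofFn (Fin.snoc f y) = List.ofFn f ++ [y] := by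
  rw [List.ofFn_succ_last]
  simp

namespace Matrix

variable {ι R : Type*} [CommRing R] {n : ℕ}

theorem det_submatrix_insertNth_left (A : Matrix ι ι R) (i : Fin (n + 1)) (x : ι)
    (r : Fin n → ι) (c : Fin (n + 1) → ι) :
    (A.submatrix (i.insertNth x r) c).det =
      ∑ j : Fin (n + 1),
        (-1) ^ ((i : ℕ) + j) * A x (c j) * (A.submatrix r (j.removeNth c)).det := by
  rw [det_succ_row _ i]
  simp only [submatrix_apply, submatrix_submatrix, Function.comp_def, Fin.insertNth_apply_same,
    Fin.insertNth_apply_succAbove]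
  rfl

theorem det_submatrix_insertNth_right (A : Matrix ι ι R) (r : Fin (n + 1) → ι)
    (j : Fin (n + 1)) (x : ι) (c : Fin n → ι) :
    (A.submatrix r (j.insertNth x c)).det =
      ∑ i : Fin (n + 1),
        (-1) ^ ((i : ℕ) + j) * A (r i) x * (A.submatrix (i.removeNth r) c).det := by
  rw [← det_transpose, transpose_submatrix, det_submatrix_insertNth_left]
  simp_rw [← transpose_submatrix, det_transpose, add_comm (j : ℕ)]
  rfl

theorem det_submatrix_insertNth_left_eq_cons (A : Matrix ι ι R) (i : Fin (n + 1)) (x : ι)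
    (r : Fin n → ι) (c : Fin (n + 1) → ι) :
    (A.submatrix (i.insertNth x r) c).det =
      (-1) ^ (i : ℕ) * (A.submatrix (Fin.cons x r) c).det := by
  rw [← Fin.insertNth_zero', det_submatrix_insertNth_left, det_submatrix_insertNth_left,
    Finset.mul_sum]
  simp [pow_add, mul_assoc]

theorem det_submatrix_insertNth_right_eq_cons (A : Matrix ι ι R) (r : Fin (n + 1) → ι)
    (j : Fin (n + 1)) (x : ι) (c : Fin n → ι) :
    (A.submatrix r (j.insertNth x c)).det =
      (-1) ^ (j : ℕ) * (A.submatrix r (Fin.cons x c)).det := by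
  rw [← det_transpose, transpose_submatrix, det_submatrix_insertNth_left_eq_cons,
    ← transpose_submatrix, det_transpose]

theorem det_submatrix_insertNth_right_eq_zero (A : Matrix ι ι R) (r : Fin (n + 1) → ι)
    (j : Fin (n + 1)) {x : ι} {c : Fin n → ι} (hx : x ∈ Set.range c) :
    (A.submatrix r (j.insertNth x c)).det = 0 := by
  obtain ⟨k, rfl⟩ := hx
  exact det_zero_of_column_eq (Fin.ne_succAbove j k) fun _ => by simp

theorem IsSymm.sum_det_submatrix_mul_det_insertNth_comm {A : Matrix ι ι R} (hA : A.IsSymm)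
    {m : ℕ} (R₀ : Fin (n + 1) → ι) (C₀ : Fin n → ι) (j : Fin (n + 1))
    (T : Fin (m + 1) → ι) (C : Fin m → ι) (l₀ : Fin (m + 1)) :
    ∑ i : Fin (n + 1), (-1) ^ ((i : ℕ) + j) * (A.submatrix (i.removeNth R₀) C₀).det *
        (A.submatrix T (l₀.insertNth (R₀ i) C)).det =
      ∑ l : Fin (m + 1), (-1) ^ ((l : ℕ) + l₀) * (A.submatrix (l.removeNth T) C).det *
        (A.submatrix R₀ (j.insertNth (T l) C₀)).det := by
  simp only [det_submatrix_insertNth_right, Finset.mul_sum]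
  rw [Finset.sum_comm]
  refine Finset.sum_congr rfl fun l _ => Finset.sum_congr rfl fun i _ => ?_
  rw [hA.apply]
  ring

section CayleyMengerRows

variable {A : Matrix ι ι R} {q : ℕ} (M : Fin (q + 2) → ι) (K : Fin (q + 1) → ι)
  (z s a b : ι)

theorem sum_det_removeNth_cons_snoc (C₀ : Fin (q + 3) → ι) (T : Fin (q + 4) → ι) :
    ∑ i : Fin (q + 4), (-1) ^ ((i : ℕ) + (Fin.last (q + 1)).castSucc.succ) *
        (A.submatrix (i.removeNth (Fin.cons z (Fin.snoc M b) : Fin (q + 4) → ι)) C₀).det *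
        (A.submatrix T ((0 : Fin (q + 3)).succ.insertNth
          ((Fin.cons z (Fin.snoc M b) : Fin (q + 4) → ι) i) (Fin.cons z (Fin.snoc K b)))).det =
      ∑ ν : Fin (q + 2), (-1) ^ (q + 1 - ν) *
        (A.submatrix (Fin.cons z (Fin.snoc (ν.removeNth M) b)) C₀).det *
        (A.submatrix T (Fin.cons z (Fin.cons (M ν) (Fin.snoc K b)))).det := by
  rw [Fin.sum_univ_succ, Fin.sum_univ_castSucc]
  simp only [Fin.cons_zero, Fin.cons_succ, Fin.snoc_last, Fin.snoc_castSucc]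
  rw [det_submatrix_insertNth_right_eq_zero (x := z) _ _ _ ⟨0, rfl⟩,
    det_submatrix_insertNth_right_eq_zero (x := b) _ _ _ ⟨Fin.last _, by simp⟩,
    mul_zero, mul_zero, zero_add, add_zero]
  simp only [Fin.removeNth_succ_cons, Fin.removeNth_castSucc_snoc, Fin.insertNth_succ_cons,
    Fin.insertNth_zero']
  refine Finset.sum_congr rfl fun ν _ => ?_
  have hν : (ν : ℕ) ≤ q + 1 := Fin.is_le ν
  rw [show ((ν.castSucc.succ : Fin (q + 4)) : ℕ) + (Fin.last (q + 1)).castSucc.succ =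
      (q + 1 - ν) + 2 * (ν + 1) by simp; omega, pow_add, pow_mul, neg_one_sq, one_pow, mul_one]

theorem sum_det_removeNth_cons_cons_snoc (R₀ : Fin (q + 4) → ι) :
    ∑ l : Fin (q + 4), (-1) ^ ((l : ℕ) + (0 : Fin (q + 3)).succ) *
        (A.submatrix (l.removeNth (Fin.cons z (Fin.cons s (Fin.snoc K b)) : Fin (q + 4) → ι))
          (Fin.cons z (Fin.snoc K b))).det *
        (A.submatrix R₀ ((Fin.last (q + 1)).castSucc.succ.insertNth
          ((Fin.cons z (Fin.cons s (Fin.snoc K b)) : Fin (q + 4) → ι) l)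
          (Fin.cons z (Fin.snoc (Fin.snoc (Fin.init K) a) b)))).det =
      (A.submatrix R₀ (Fin.cons z (Fin.snoc (Fin.snoc K a) b))).det *
        (A.submatrix (Fin.cons z (Fin.snoc (Fin.snoc (Fin.init K) s) b))
          (Fin.cons z (Fin.snoc K b))).det +
      (A.submatrix R₀ (Fin.cons z (Fin.snoc (Fin.snoc (Fin.snoc (Fin.init K) a) s) b))).det *
        (A.submatrix (Fin.cons z (Fin.snoc K b)) (Fin.cons z (Fin.snoc K b))).det := by
  have hK : ∀ v : Fin q, K v.castSucc ∈
      Set.range (Fin.cons z (Fin.snoc (Fin.snoc (Fin.init K) a) b) : Fin (q + 3) → ι) :=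
    fun v => ⟨v.castSucc.castSucc.succ, by simp [Fin.init]⟩
  have hcol : (Fin.cons z (Fin.snoc (Fin.snoc K a) b) : Fin (q + 4) → ι) =
      (Fin.last q).castSucc.castSucc.succ.insertNth (K (Fin.last q))
        (Fin.cons z (Fin.snoc (Fin.snoc (Fin.init K) a) b)) := by
    conv_lhs => rw [← Fin.snoc_init_self K]
    simp only [Fin.insertNth_succ_cons, Fin.insertNth_castSucc_snoc, Fin.insertNth_last']
  have hrow : (Fin.cons z (Fin.snoc (Fin.snoc (Fin.init K) s) b) : Fin (q + 3) → ι) =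
      (Fin.last q).castSucc.succ.insertNth s (Fin.cons z (Fin.snoc (Fin.init K) b)) := by
    simp only [Fin.insertNth_succ_cons, Fin.insertNth_castSucc_snoc, Fin.insertNth_last']
  have hrow' : (Fin.cons z (Fin.cons s (Fin.snoc (Fin.init K) b)) : Fin (q + 3) → ι) =
      (0 : Fin (q + 2)).succ.insertNth s (Fin.cons z (Fin.snoc (Fin.init K) b)) := by
    simp only [Fin.insertNth_succ_cons, Fin.insertNth_zero']
  rw [Fin.sum_univ_succ, Fin.sum_univ_succ, Fin.sum_univ_castSucc, Fin.sum_univ_castSucc]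
  simp only [Fin.cons_zero, Fin.cons_succ, Fin.snoc_last, Fin.snoc_castSucc]
  rw [det_submatrix_insertNth_right_eq_zero (x := z) _ _ _ ⟨0, rfl⟩,
    det_submatrix_insertNth_right_eq_zero (x := b) _ _ _ ⟨Fin.last _, by simp⟩,
    Finset.sum_eq_zero fun v _ => by
      rw [det_submatrix_insertNth_right_eq_zero _ _ _ (hK v), mul_zero],
    det_submatrix_insertNth_right_eq_cons _ _ _ (K (Fin.last q))]
  simp only [mul_zero, zero_add, add_zero, Fin.removeNth_succ_cons, Fin.removeNth_castSucc_snoc,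
    Fin.removeNth_zero, Fin.removeNth_last, Fin.tail_cons, Fin.insertNth_succ_cons,
    Fin.insertNth_castSucc_snoc, Fin.insertNth_last']
  rw [hcol, det_submatrix_insertNth_right_eq_cons, hrow, hrow',
    det_submatrix_insertNth_left_eq_cons, det_submatrix_insertNth_left_eq_cons]
  simp only [Fin.val_succ, Fin.val_castSucc, Fin.val_last, Fin.val_zero]
  ring

theorem IsSymm.sum_det_removeNth_mul_det_eq (hA : A.IsSymm) :
    ∑ ν : Fin (q + 2), (-1) ^ (q + 1 - ν) *
        (A.submatrix (Fin.cons z (Fin.snoc (ν.removeNth M) b))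
          (Fin.cons z (Fin.snoc (Fin.snoc (Fin.init K) a) b))).det *
        (A.submatrix (Fin.cons z (Fin.cons s (Fin.snoc K b)))
          (Fin.cons z (Fin.cons (M ν) (Fin.snoc K b)))).det =
      (A.submatrix (Fin.cons z (Fin.snoc M b)) (Fin.cons z (Fin.snoc (Fin.snoc K a) b))).det *
        (A.submatrix (Fin.cons z (Fin.snoc (Fin.snoc (Fin.init K) s) b))
          (Fin.cons z (Fin.snoc K b))).det +
      (A.submatrix (Fin.cons z (Fin.snoc M b))
          (Fin.cons z (Fin.snoc (Fin.snoc (Fin.snoc (Fin.init K) a) s) b))).det *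
        (A.submatrix (Fin.cons z (Fin.snoc K b)) (Fin.cons z (Fin.snoc K b))).det := by
  rw [← sum_det_removeNth_cons_snoc M K z b, hA.sum_det_submatrix_mul_det_insertNth_comm,
    sum_det_removeNth_cons_cons_snoc K z s a b]

end CayleyMengerRows

end Matrix

theorem cmMinor_ofFn {m n : ℕ} (rsq : Fin m → ℝ) (ρsq : Fin m → Fin m → ℝ)
    (r c : Fin n → CMIdx m) :
    cmMinor rsq ρsq (List.ofFn r) (List.ofFn c) =
      ((Matrix.of (cmEnt rsq ρsq)).submatrix r c).det := by
  rw [cmMinor, dif_pos (by simp),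
    ← Matrix.det_submatrix_equiv_self (finCongr List.length_ofFn).symm]
  congr 1
  ext i j
  simp

theorem isSymm_of_cmEnt {m : ℕ} (rsq : Fin m → ℝ) {ρsq : Fin m → Fin m → ℝ}
    (hsym : ∀ i j, ρsq i j = ρsq j i) : (Matrix.of (cmEnt rsq ρsq)).IsSymm := by
  ext x y
  cases x <;> cases y <;> simp [cmEnt, hsym, eq_comm]

/-- Lemma 41 (identity (63)) of Aomoto–Machida, for arbitrary real Cayley–Menger data and
pairwise distinct indices `μ_1,…,μ_{p+1}, k_1,…,k_p, a, b`:
`Σ_{ν=1}^{p+1} (−1)^{p+1−ν} B(0 μ₁…μ̂_ν…μ_{p+1} b ; 0 K_{p−1} a b)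
    · B(0 ⋆ K_p b ; 0 μ_ν K_p b)
 = B(0 μ₁…μ_{p+1} b ; 0 K_p a b) · B(0 K_{p−1} ⋆ b ; 0 K_p b)
   + B(0 μ₁…μ_{p+1} b ; 0 K_{p−1} a ⋆ b) · B(0 K_p b)`. -/
theorem cm_laplace_identity (m p : ℕ) (hp : 1 ≤ p)
    (rsq : Fin m → ℝ) (ρsq : Fin m → Fin m → ℝ) (hsym : ∀ i j, ρsq i j = ρsq j i)
    (μ : Fin (p + 1) → Fin m) (kf : Fin p → Fin m) (a b : Fin m) :
    (∑ ν : Fin (p + 1),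
      (-1 : ℝ) ^ (p - (ν : ℕ)) *
        cmMinor rsq ρsq
          (CMIdx.zero :: (List.ofFn fun t : Fin p => CMIdx.pt (μ (ν.succAbove t))) ++
            [CMIdx.pt b])
          (CMIdx.zero ::
            (List.ofFn fun t : Fin (p - 1) => CMIdx.pt (kf ⟨(t : ℕ), by omega⟩)) ++
            [CMIdx.pt a, CMIdx.pt b]) *
        cmMinor rsq ρsq
          ([CMIdx.zero, CMIdx.star] ++ (List.ofFn fun t => CMIdx.pt (kf t)) ++
            [CMIdx.pt b])
          ([CMIdx.zero, CMIdx.pt (μ ν)] ++ (List.ofFn fun t => CMIdx.pt (kf t)) ++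
            [CMIdx.pt b])) =
      cmMinor rsq ρsq
          (CMIdx.zero :: (List.ofFn fun t => CMIdx.pt (μ t)) ++ [CMIdx.pt b])
          (CMIdx.zero :: (List.ofFn fun t => CMIdx.pt (kf t)) ++
            [CMIdx.pt a, CMIdx.pt b]) *
        cmMinor rsq ρsq
          (CMIdx.zero ::
            (List.ofFn fun t : Fin (p - 1) => CMIdx.pt (kf ⟨(t : ℕ), by omega⟩)) ++
            [CMIdx.star, CMIdx.pt b])
          (CMIdx.zero :: (List.ofFn fun t => CMIdx.pt (kf t)) ++ [CMIdx.pt b]) +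
      cmMinor rsq ρsq
          (CMIdx.zero :: (List.ofFn fun t => CMIdx.pt (μ t)) ++ [CMIdx.pt b])
          (CMIdx.zero ::
            (List.ofFn fun t : Fin (p - 1) => CMIdx.pt (kf ⟨(t : ℕ), by omega⟩)) ++
            [CMIdx.pt a, CMIdx.star, CMIdx.pt b]) *
        cmMinor rsq ρsq
          (CMIdx.zero :: (List.ofFn fun t => CMIdx.pt (kf t)) ++ [CMIdx.pt b])
          (CMIdx.zero :: (List.ofFn fun t => CMIdx.pt (kf t)) ++ [CMIdx.pt b]) := by
  obtain ⟨q, rfl⟩ : ∃ q, p = q + 1 := ⟨p - 1, by omega⟩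
  have key := (isSymm_of_cmEnt rsq hsym).sum_det_removeNth_mul_det_eq
    (fun t => CMIdx.pt (μ t)) (fun t => CMIdx.pt (kf t)) CMIdx.zero CMIdx.star (CMIdx.pt a)
    (CMIdx.pt b)
  simp only [← cmMinor_ofFn, List.ofFn_cons, List.ofFn_snoc, List.append_assoc,
    List.cons_append, List.nil_append] at key ⊢
  exact key
end

section
/- Dimension n = 1: for 1 ≤ i ≤ m let f_i(x) = x^2 + 2α_{i1}x + α_{i0} with α_{i1}, α_{i0} ∈ ℝ, put r_i^2 = α_{i1}^2 − α_{i0}, the signed distance ρ_{ik} = α_{i1} − α_{k1}, and ρ_{ik}^2 its square. For distinct indices j, k, l define Δ_{jkl} = det [[1, 1, 1], [α_{j0}, α_{k0}, α_{l0}], [α_{j1}, α_{k1}, α_{l1}]]. Then: (i) B(0 ⋆ k l ; 0 j k l) = −2 ρ_{kl} Δ_{jkl}; (ii) B(0 ⋆ j k l) = −2 Δ_{jkl}^2; and (iii) Δ_{jkl} = ρ_{jk} ρ_{jl} ρ_{kl} − ρ_{kl} r_j^2 + ρ_{jl} r_k^2 − ρ_{jk} r_l^2. -/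
/-!
Encode the quadric `f_i` by `(1, α_{i1}, α_{i0}) ∈ R³` with the form `ad' + a'd - 2cc'`, under
which the pairing of two quadrics is `ρ_{ik}² - r_i² - r_k²`. Adding a hyperbolic plane, which
absorbs the border row `0` and the row `⋆`, turns `B(0⋆jkl)` into a Gram matrix `Wᵀ G W` with
`det G = -2` and `det W = Δ_{jkl}`, so `B(0⋆jkl) = -2 Δ_{jkl}²`. The columns `0, j, k, l` of `W`
lie in a hyperplane of `R⁵`; restricted to it, `B(0⋆kl ; 0jkl)` becomes a product of two `4 × 4`
matrices, with determinants `-2 ρ_{kl}` and `Δ_{jkl}`.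
-/

open Matrix

namespace CayleyMenger

variable {R : Type*} [CommRing R] (αj1 αj0 αk1 αk0 αl1 αl0 : R)

/-- `Δ_{jkl}`. -/
def coeffMatrix : Matrix (Fin 3) (Fin 3) R :=
  !![1, 1, 1; αj0, αk0, αl0; αj1, αk1, αl1]

/-- `B(0⋆jkl)`. -/
def principalMinor : Matrix (Fin 5) (Fin 5) R :=
  !![0, 1, 1, 1, 1;
     1, 0, αj1 ^ 2 - αj0, αk1 ^ 2 - αk0, αl1 ^ 2 - αl0;
     1, αj1 ^ 2 - αj0, 0, (αj1 - αk1) ^ 2, (αj1 - αl1) ^ 2;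
     1, αk1 ^ 2 - αk0, (αj1 - αk1) ^ 2, 0, (αk1 - αl1) ^ 2;
     1, αl1 ^ 2 - αl0, (αj1 - αl1) ^ 2, (αk1 - αl1) ^ 2, 0]

/-- `B(0⋆kl ; 0jkl)`. -/
def mixedMinor : Matrix (Fin 4) (Fin 4) R :=
  !![0, 1, 1, 1;
     1, αj1 ^ 2 - αj0, αk1 ^ 2 - αk0, αl1 ^ 2 - αl0;
     1, (αj1 - αk1) ^ 2, 0, (αk1 - αl1) ^ 2;
     1, (αj1 - αl1) ^ 2, (αk1 - αl1) ^ 2, 0]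

def inversiveForm : Matrix (Fin 5) (Fin 5) R :=
  !![0, 0, 1, 0, 0;
     0, -2, 0, 0, 0;
     1, 0, 0, 0, 0;
     0, 0, 0, 0, 1;
     0, 0, 0, 1, 0]

/-- Columns: the vectors of `0`, `⋆`, `j`, `k`, `l`. -/
def inversiveFrame : Matrix (Fin 5) (Fin 5) R :=
  !![0, 0, 1, 1, 1;
     0, 0, αj1, αk1, αl1;
     0, 0, αj0, αk0, αl0;
     0, 1, 1, 1, 1;
     1, 0, αj1 ^ 2 - αj0, αk1 ^ 2 - αk0, αl1 ^ 2 - αl0]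

/-- The columns `0, j, k, l` of `inversiveFrame`, in the coordinates `1, 2, 3, 5` of the hyperplane
`x₁ = x₄`. -/
def hyperplaneFrame : Matrix (Fin 4) (Fin 4) R :=
  !![0, 1, 1, 1;
     0, αj1, αk1, αl1;
     0, αj0, αk0, αl0;
     1, αj1 ^ 2 - αj0, αk1 ^ 2 - αk0, αl1 ^ 2 - αl0]

/-- Columns: the rows `0, ⋆, k, l` of `(inversiveForm * inversiveFrame)ᵀ`, restricted to the
hyperplane `x₁ = x₄`. -/
def hyperplaneCoframe : Matrix (Fin 4) (Fin 4) R :=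
  !![1, 0, αk1 ^ 2, αl1 ^ 2;
     0, 0, -2 * αk1, -2 * αl1;
     0, 0, 1, 1;
     0, 1, 1, 1]

theorem det_coeffMatrix :
    (coeffMatrix αj1 αj0 αk1 αk0 αl1 αl0).det =
      (αj1 - αk1) * (αj1 - αl1) * (αk1 - αl1) - (αk1 - αl1) * (αj1 ^ 2 - αj0)
        + (αj1 - αl1) * (αk1 ^ 2 - αk0) - (αj1 - αk1) * (αl1 ^ 2 - αl0) := by
  simp [coeffMatrix, det_fin_three]
  ring

theorem det_inversiveForm : (inversiveForm : Matrix (Fin 5) (Fin 5) R).det = -2 := by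
  simp [inversiveForm, det_succ_column_zero, Fin.sum_univ_succ, Fin.succAbove]

theorem det_inversiveFrame :
    (inversiveFrame αj1 αj0 αk1 αk0 αl1 αl0).det = (coeffMatrix αj1 αj0 αk1 αk0 αl1 αl0).det := by
  simp [inversiveFrame, coeffMatrix, det_succ_column_zero, Fin.sum_univ_succ,
    Fin.succAbove]
  ring

theorem principalMinor_eq_gram :
    principalMinor αj1 αj0 αk1 αk0 αl1 αl0 =
      (inversiveFrame αj1 αj0 αk1 αk0 αl1 αl0)ᵀ * inversiveForm *
        inversiveFrame αj1 αj0 αk1 αk0 αl1 αl0 := by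
  ext a b
  fin_cases a <;> fin_cases b <;>
    simp [principalMinor, inversiveFrame, inversiveForm, mul_apply, Fin.sum_univ_five] <;> ring

theorem det_principalMinor :
    (principalMinor αj1 αj0 αk1 αk0 αl1 αl0).det =
      -2 * (coeffMatrix αj1 αj0 αk1 αk0 αl1 αl0).det ^ 2 := by
  rw [principalMinor_eq_gram, det_mul, det_mul, det_transpose, det_inversiveForm,
    det_inversiveFrame]
  ring

theorem det_hyperplaneFrame :
    (hyperplaneFrame αj1 αj0 αk1 αk0 αl1 αl0).det = (coeffMatrix αj1 αj0 αk1 αk0 αl1 αl0).det := by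
  simp [hyperplaneFrame, coeffMatrix, det_succ_column_zero, Fin.sum_univ_succ,
    Fin.succAbove]
  ring

theorem det_hyperplaneCoframe : (hyperplaneCoframe αk1 αl1).det = -2 * (αk1 - αl1) := by
  simp [hyperplaneCoframe, det_succ_column_zero, Fin.sum_univ_succ, Fin.succAbove]
  ring

theorem mixedMinor_eq_transpose_mul :
    mixedMinor αj1 αj0 αk1 αk0 αl1 αl0 =
      (hyperplaneCoframe αk1 αl1)ᵀ * hyperplaneFrame αj1 αj0 αk1 αk0 αl1 αl0 := by
  ext a b
  fin_cases a <;> fin_cases b <;>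
    simp [mixedMinor, hyperplaneFrame, hyperplaneCoframe, mul_apply, Fin.sum_univ_four] <;> ring

theorem det_mixedMinor :
    (mixedMinor αj1 αj0 αk1 αk0 αl1 αl0).det =
      -2 * (αk1 - αl1) * (coeffMatrix αj1 αj0 αk1 αk0 αl1 αl0).det := by
  rw [mixedMinor_eq_transpose_mul, det_mul, det_transpose, det_hyperplaneCoframe,
    det_hyperplaneFrame]

end CayleyMenger

open CayleyMenger in
/-- Dimension `n = 1`: for three quadrics `f_i(x) = x² + 2α_{i1}x + α_{i0}` with
`r_i² = α_{i1}² − α_{i0}`, signed distances `ρ_{ik} = α_{i1} − α_{k1}`, and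
`Δ_{jkl} = det [[1,1,1],[α_{j0},α_{k0},α_{l0}],[α_{j1},α_{k1},α_{l1}]]`, one has
(i) `B(0⋆kl ; 0jkl) = −2 ρ_{kl} Δ_{jkl}`, (ii) `B(0⋆jkl) = −2 Δ_{jkl}²`, and
(iii) `Δ_{jkl} = ρ_{jk} ρ_{jl} ρ_{kl} − ρ_{kl} r_j² + ρ_{jl} r_k² − ρ_{jk} r_l²`. -/
theorem cm_dim_one_cayley_menger (αj1 αj0 αk1 αk0 αl1 αl0 : ℝ) :
    (Matrix.det !![(0 : ℝ), 1, 1, 1;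
                   1, αj1 ^ 2 - αj0, αk1 ^ 2 - αk0, αl1 ^ 2 - αl0;
                   1, (αj1 - αk1) ^ 2, 0, (αk1 - αl1) ^ 2;
                   1, (αj1 - αl1) ^ 2, (αk1 - αl1) ^ 2, 0] =
      -2 * (αk1 - αl1) * Matrix.det !![(1 : ℝ), 1, 1; αj0, αk0, αl0; αj1, αk1, αl1]) ∧
    (Matrix.det !![(0 : ℝ), 1, 1, 1, 1;
                   1, 0, αj1 ^ 2 - αj0, αk1 ^ 2 - αk0, αl1 ^ 2 - αl0;
                   1, αj1 ^ 2 - αj0, 0, (αj1 - αk1) ^ 2, (αj1 - αl1) ^ 2;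
                   1, αk1 ^ 2 - αk0, (αj1 - αk1) ^ 2, 0, (αk1 - αl1) ^ 2;
                   1, αl1 ^ 2 - αl0, (αj1 - αl1) ^ 2, (αk1 - αl1) ^ 2, 0] =
      -2 * (Matrix.det !![(1 : ℝ), 1, 1; αj0, αk0, αl0; αj1, αk1, αl1]) ^ 2) ∧
    (Matrix.det !![(1 : ℝ), 1, 1; αj0, αk0, αl0; αj1, αk1, αl1] =
      (αj1 - αk1) * (αj1 - αl1) * (αk1 - αl1)
        - (αk1 - αl1) * (αj1 ^ 2 - αj0) + (αj1 - αl1) * (αk1 ^ 2 - αk0)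
        - (αj1 - αk1) * (αl1 ^ 2 - αl0)) :=
  ⟨det_mixedMinor .., det_principalMinor .., det_coeffMatrix ..⟩
end
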